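/- arXiv:1108.6295 — 5 statements merged into one kernel-verified Lean document; each statement's English description precedes it below -/
import Mathlib

section
/- Let l ≥ 1 and n ≥ 3 be integers, and let W be a word over the alphabet {1,…,l} that is not strongly n-divisible over the set Z of all noncyclic words of length 2 (with boundary 2n). Then every family of pairwise disjoint occurrences in W of subwords of the form z^m, where z is a noncyclic word of length 2 and m > 2n, such that no two of the periods z are cyclic rotations of each other, has at most (2l−1)(n−1)(n−2)/2 members. -/
/-- `u` is lexicographically greater than `v`: at the first position where they
differ, `u` has the larger letter (words where one is a prefix of the other are
incomparable). -/
def WordGt {α : Type*} [LinearOrder α] (u v : List α) : Prop :=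
  List.Lex (· < ·) v u ∧ ¬ v <+: u

/-- `wpow z k` is the concatenation of `k` copies of the word `z`. -/
def wpow {α : Type*} (z : List α) : ℕ → List α
  | 0 => []
  | k + 1 => z ++ wpow z k

/-- A word is noncyclic (primitive) if it is nonempty and is not a proper power. -/
def Noncyclic {α : Type*} (z : List α) : Prop :=
  z ≠ [] ∧ ∀ (v : List α) (k : ℕ), 2 ≤ k → z ≠ wpow v k

/-- `W` is `n`-divisible: `W = W₀W₁⋯Wₙ` with `W₁,…,Wₙ` nonempty and in strictly
decreasing lexicographic order. -/
def NDivisible {α : Type*} [LinearOrder α] (W : List α) (n : ℕ) : Prop :=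
  ∃ (W₀ : List α) (f : Fin n → List α),
    W = W₀ ++ (List.ofFn f).flatten ∧
    (∀ i, f i ≠ []) ∧
    (∀ i j, i < j → WordGt (f i) (f j))

/-- `W` is strongly `n`-divisible over the set of words `Z` (with boundary `2n`):
it is `n`-divisible with each `Wᵢ` (`1 ≤ i ≤ n`) beginning with `zᵢ^{2n}` for
pairwise distinct `z₁,…,zₙ ∈ Z`. -/
def StronglyNDivisible {α : Type*} [LinearOrder α] (W : List α) (n : ℕ)
    (Z : Set (List α)) : Prop :=
  ∃ (W₀ : List α) (f : Fin n → List α) (z : Fin n → List α),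
    W = W₀ ++ (List.ofFn f).flatten ∧
    (∀ i, f i ≠ []) ∧
    (∀ i j, i < j → WordGt (f i) (f j)) ∧
    (∀ i, z i ∈ Z ∧ wpow (z i) (2 * n) <+: f i) ∧
    Function.Injective z

/-- `u` occurs as a subword of `W` starting at position `p`. -/
def OccursAt {α : Type*} (W u : List α) (p : ℕ) : Prop :=
  ∃ pre suf : List α, pre.length = p ∧ W = pre ++ u ++ suf

/-!
Each period `z i` is `x i y i` or `y i x i` with letters `x i < y i`, and since its exponent
exceeds `2n`, both rotations occur to the power `2n` within one letter of `pos i`. Order the `2N`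
rotations so that `p < q` when `p` starts left of `q` and has the larger word. Cutting `W` at the
starts of a chain of `n` rotations makes it strongly `n`-divisible, so all chains are shorter.
With `r i` the height of `y i x i` and `s i` the coheight of `x i y i` we get `r i + s i ≤ n - 2`,
and comparing the heights of rotations of two periods forces their letter pairs to obey
lexicographic or interval-stacking rules. Grouping the periods by a pair of levels `a < b ≤ n - 2`
read off from `(r i, s i)` gives `(n-1)(n-2)/2` classes, and inside one class these rules make
a suitable choice of `y i` or `x i + 1` an injection into two copies of `{1, …, l - 1}`.
-/

section Words

variable {α : Type*}

theorem wpow_length (z : List α) (k : ℕ) : (wpow z k).length = k * z.length := by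
  induction k with
  | zero => simp [wpow]
  | succ k ih => simp only [wpow, List.length_append, ih]; ring

theorem wpow_add (z : List α) (a b : ℕ) : wpow z (a + b) = wpow z a ++ wpow z b := by
  induction a with
  | zero => simp [wpow]
  | succ a ih => rw [Nat.add_right_comm, wpow, ih, wpow, List.append_assoc]

theorem prefix_wpow (z : List α) {k : ℕ} (hk : k ≠ 0) : z <+: wpow z k := by
  obtain ⟨k, rfl⟩ := Nat.exists_eq_succ_of_ne_zero hk
  exact List.prefix_append _ _

theorem wpow_append_succ (u v : List α) (k : ℕ) :
    wpow (u ++ v) (k + 1) = u ++ wpow (v ++ u) k ++ v := by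
  induction k with
  | zero => simp [wpow]
  | succ k ih => rw [wpow, ih, wpow]; simp

theorem noncyclic_pair_iff {a b : α} : Noncyclic [a, b] ↔ a ≠ b := by
  refine ⟨fun h hab => h.2 [a] 2 le_rfl (by simp [hab, wpow]), fun hab => ⟨by simp, ?_⟩⟩
  intro v k hk heq
  have hlen := congrArg List.length heq
  rw [wpow_length] at hlen
  obtain ⟨c, rfl⟩ : ∃ c, v = [c] := by
    match v, hlen with
    | [c], _ => exact ⟨c, rfl⟩
    | [], h => simp at h
    | _ :: _ :: _, h => simp only [List.length_cons, List.length_nil] at h; nlinarith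
  obtain rfl : k = 2 := by simpa using hlen.symm
  simp only [wpow, List.cons_append, List.nil_append, List.cons.injEq] at heq
  exact hab (heq.1.trans heq.2.1.symm)

theorem occursAt_iff {W u : List α} {p : ℕ} :
    OccursAt W u p ↔ u <+: W.drop p ∧ p ≤ W.length := by
  constructor
  · rintro ⟨pre, suf, rfl, rfl⟩
    simp
  · rintro ⟨⟨suf, hsuf⟩, hp⟩
    refine ⟨W.take p, suf, by simpa using hp, ?_⟩
    rw [List.append_assoc, hsuf, List.take_append_drop]

theorem OccursAt.of_append {W u v : List α} {p : ℕ} (h : OccursAt W (u ++ v) p) :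
    OccursAt W u p := by
  obtain ⟨pre, suf, hp, rfl⟩ := h
  exact ⟨pre, v ++ suf, hp, by simp⟩

theorem OccursAt.wpow_pair_of_lt {W : List α} {a b : α} {k m p : ℕ} (hkm : k < m)
    (h : OccursAt W (wpow [a, b] m) p) :
    OccursAt W (wpow [a, b] k) p ∧ OccursAt W (wpow [b, a] k) (p + 1) := by
  obtain ⟨j, rfl⟩ := Nat.exists_eq_add_of_lt hkm
  constructor
  · rw [Nat.add_assoc, wpow_add] at h
    exact h.of_append
  · obtain ⟨pre, suf, hp, rfl⟩ := h
    refine ⟨pre ++ [a], wpow [b, a] j ++ [b] ++ suf, by simp [hp], ?_⟩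
    rw [show [a, b] = [a] ++ [b] from rfl, wpow_append_succ, wpow_add]
    simp

theorem List.Lex.append_of_length_eq {r : α → α → Prop} {v u : List α} (h : List.Lex r v u)
    (hl : v.length = u.length) (s t : List α) : List.Lex r (v ++ s) (u ++ t) := by
  induction h with
  | nil => simp at hl
  | cons _ ih => exact .cons (ih (by simpa using hl))
  | rel h => exact .rel h

theorem wordGt_of_prefix [LinearOrder α] {f g u v : List α} (hu : u <+: f) (hv : v <+: g)
    (hl : v.length = u.length) (hvu : v < u) : WordGt f g := by
  obtain ⟨s, rfl⟩ := hu
  obtain ⟨t, rfl⟩ := hv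
  refine ⟨List.Lex.append_of_length_eq hvu hl t s, fun hpre => hvu.ne ?_⟩
  have hv : v <+: u ++ s := (List.prefix_append v t).trans hpre
  exact (List.prefix_of_prefix_length_le hv (List.prefix_append u s) hl.le).eq_of_length hl

theorem flatten_ofFn_take_drop (W : List α) {Q : ℕ → ℕ} (hQ : Monotone Q) (t : ℕ) :
    (List.ofFn fun k : Fin t => (W.drop (Q k)).take (Q (k + 1) - Q k)).flatten =
      (W.drop (Q 0)).take (Q t - Q 0) := by
  induction t with
  | zero => simp
  | succ t ih =>
    have h0t := hQ (Nat.zero_le t)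
    have htt := hQ (Nat.le_add_right t 1)
    rw [List.ofFn_succ', List.concat_eq_append, List.flatten_append]
    simp only [Fin.val_castSucc, Fin.val_last, List.flatten_cons, List.flatten_nil,
      List.append_nil]
    rw [ih, show Q (t + 1) - Q 0 = (Q t - Q 0) + (Q (t + 1) - Q t) by omega, List.take_add,
      List.drop_drop, show Q 0 + (Q t - Q 0) = Q t by omega]

theorem exists_flatten_of_occursAt {W : List α} {n : ℕ} (u : Fin n → List α) (q : Fin n → ℕ)
    (hocc : ∀ k, OccursAt W (u k) (q k))
    (hsep : ∀ k k', k < k' → q k + (u k).length ≤ q k') :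
    ∃ (W₀ : List α) (f : Fin n → List α),
      W = W₀ ++ (List.ofFn f).flatten ∧ ∀ k, u k <+: f k := by
  have hend : ∀ k, q k + (u k).length ≤ W.length := fun k => by
    obtain ⟨hpre, hq⟩ := occursAt_iff.1 (hocc k)
    have := hpre.length_le
    simp only [List.length_drop] at this
    omega
  set Q : ℕ → ℕ := fun k => if h : k < n then q ⟨k, h⟩ else W.length with hQ
  have hQmono : Monotone Q := by
    intro a b hab
    simp only [hQ]
    split_ifs with ha hb hb
    · rcases hab.lt_or_eq with hlt | rfl
      · exact (Nat.le_add_right _ _).trans (hsep _ _ hlt)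
      · rfl
    · exact (Nat.le_add_right _ _).trans (hend _)
    · omega
    · rfl
  have hQk : ∀ k : Fin n, Q k = q k := fun k => by simp [hQ]
  refine ⟨W.take (Q 0), fun k => (W.drop (Q k)).take (Q (k + 1) - Q k), ?_, fun k => ?_⟩
  · rw [flatten_ofFn_take_drop W hQmono, show Q n = W.length by simp [hQ],
      List.take_of_length_le (l := W.drop (Q 0)) (by simp), List.take_append_drop]
  · have hnext : q k + (u k).length ≤ Q (k + 1) := by
      simp only [hQ]
      split_ifs with h
      · exact hsep k ⟨k + 1, h⟩ (Fin.lt_def.2 (Nat.lt_succ_self _))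
      · exact hend k
    show u k <+: (W.drop (Q k)).take (Q (k + 1) - Q k)
    rw [hQk, List.prefix_take_iff]
    exact ⟨(occursAt_iff.1 (hocc k)).1, by omega⟩

theorem stronglyNDivisible_of_occursAt [LinearOrder α] {W : List α} {n : ℕ}
    {Z : Set (List α)} (z : Fin n → List α) (q : Fin n → ℕ) (hZ : ∀ k, z k ∈ Z)
    (hne : ∀ k, z k ≠ []) (hlen : ∀ k k', (z k).length = (z k').length) (hanti : StrictAnti z)
    (hocc : ∀ k, OccursAt W (wpow (z k) (2 * n)) (q k))
    (hsep : ∀ k k', k < k' → q k + (wpow (z k) (2 * n)).length ≤ q k') :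
    StronglyNDivisible W n Z := by
  obtain ⟨W₀, f, hW, hpre⟩ := exists_flatten_of_occursAt _ q hocc hsep
  have hzf : ∀ k, z k <+: f k := fun k =>
    (prefix_wpow (z k) (by have := k.pos; omega)).trans (hpre k)
  refine ⟨W₀, f, z, hW, fun k hf => hne k ?_, fun k k' hkk' => ?_,
    fun k => ⟨hZ k, hpre k⟩, hanti.injective⟩
  · simpa [hf] using hzf k
  · exact wordGt_of_prefix (hzf k) (hzf k') (hlen k' k) (hanti hkk')

end Words

section Heights

open Order

variable {β : Type*} [PartialOrder β] {d : ℕ}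

theorem height_le_height_of_forall_lt {a b : β} (h : ∀ c < a, c < b) :
    height a ≤ height b := by
  rw [height_eq_iSup_lt_height a, height_eq_iSup_lt_height b]
  exact iSup₂_le fun c hc => le_iSup₂_of_le c (h c hc) le_rfl

theorem height_ne_top_of_length_le (hβ : ∀ p : LTSeries β, p.length ≤ d) (a : β) :
    height a ≠ ⊤ :=
  ((height_le fun p _ => by exact_mod_cast hβ p).trans_lt (ENat.natCast_lt_top d)).ne

theorem coheight_ne_top_of_length_le (hβ : ∀ p : LTSeries β, p.length ≤ d) (a : β) :
    coheight a ≠ ⊤ :=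
  ((coheight_le fun p _ => by exact_mod_cast hβ p).trans_lt (ENat.natCast_lt_top d)).ne

theorem height_toNat_lt_of_lt (hβ : ∀ p : LTSeries β, p.length ≤ d) {a b : β} (h : a < b) :
    (height a).toNat < (height b).toNat := by
  have hlt := height_add_one_le h
  lift height a to ℕ using height_ne_top_of_length_le hβ a with u
  lift height b to ℕ using height_ne_top_of_length_le hβ b with v
  simp only [ENat.toNat_natCast]
  exact_mod_cast hlt

theorem coheight_toNat_lt_of_lt (hβ : ∀ p : LTSeries β, p.length ≤ d) {a b : β} (h : a < b) :
    (coheight b).toNat < (coheight a).toNat := by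
  have hlt := coheight_add_one_le h
  lift coheight a to ℕ using coheight_ne_top_of_length_le hβ a with u
  lift coheight b to ℕ using coheight_ne_top_of_length_le hβ b with v
  simp only [ENat.toNat_natCast]
  exact_mod_cast hlt

theorem height_toNat_add_coheight_toNat_le (hβ : ∀ p : LTSeries β, p.length ≤ d) (a : β) :
    (height a).toNat + (coheight a).toNat ≤ d := by
  obtain ⟨p, hp, hplen⟩ := exists_series_of_height_eq_coe a
    (ENat.natCast_toNat (height_ne_top_of_length_le hβ a)).symm
  obtain ⟨q, hq, hqlen⟩ := exists_series_of_coheight_eq_coe a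
    (ENat.natCast_toNat (coheight_ne_top_of_length_le hβ a)).symm
  have := hβ (p.smash q (hp.trans hq.symm))
  rw [RelSeries.smash_length] at this
  omega

theorem height_toNat_add_coheight_toNat_le_of_forall_lt (hβ : ∀ p : LTSeries β, p.length ≤ d)
    {a b : β} (h : ∀ c < a, c < b) : (height a).toNat + (coheight b).toNat ≤ d :=
  (Nat.add_le_add_right (ENat.toNat_le_toNat (height_le_height_of_forall_lt h)
    (height_ne_top_of_length_le hβ b)) _).trans (height_toNat_add_coheight_toNat_le hβ b)

theorem height_toNat_add_coheight_toNat_lt_of_lt (hβ : ∀ p : LTSeries β, p.length ≤ d)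
    {a b : β} (h : a < b) : (height a).toNat + (coheight b).toNat < d :=
  (Nat.add_lt_add_right (height_toNat_lt_of_lt hβ h) _).trans_le
    (height_toNat_add_coheight_toNat_le hβ b)

end Heights

def IncDec {β α γ : Type*} (_f : β → α) (_g : β → γ) : Type _ := β

namespace IncDec

variable {β α γ : Type*} [Preorder α] [Preorder γ] (f : β → α) (g : β → γ)

def Lt (p q : IncDec f g) : Prop := f p < f q ∧ g q < g p

instance : IsStrictOrder (IncDec f g) (Lt f g) where
  irrefl _ h := lt_irrefl _ h.1
  trans _ _ _ h₁ h₂ := ⟨h₁.1.trans h₂.1, h₂.2.trans h₁.2⟩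

instance : PartialOrder (IncDec f g) := partialOrderOfSO (Lt f g)

variable {f g}

theorem lt_iff {p q : IncDec f g} : p < q ↔ f p < f q ∧ g q < g p := Iff.rfl

end IncDec

inductive IntervalKind
  | bottom
  | top
  | mid

section Intervals

variable {ι : Type*} (pos : ι → ℕ) (x y : ι → ℕ) (kind : ι → IntervalKind)

structure IntervalRules : Prop where
  bottom_le : ∀ i j, pos i < pos j → kind i = .bottom → y i ≤ x j
  le_top : ∀ i j, pos i < pos j → kind j = .top → y i ≤ x j
  mid_mid : ∀ i j, pos i < pos j → kind i = .mid → kind j = .mid → (x i, y i) < (x j, y j)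
  top_mid : ∀ i j, pos i < pos j → kind i = .top → kind j = .mid →
    toLex (y i, x i) < toLex (y j, x j)
  mid_bottom : ∀ i j, pos i < pos j → kind i = .mid → kind j = .bottom →
    toLex (x i, y i) < toLex (x j, y j)

-- A mid interval whose `x` is shared by an earlier mid one has a larger `y` than every earlier
-- interval of any kind but bottom, so it can take the `y`-slot instead of the `x`-slot.
open Classical in
noncomputable def intervalSlot (i : ι) : ℕ ⊕ ℕ :=
  match kind i with
  | .bottom => .inl (y i)
  | .top => .inr (y i)
  | .mid => if ∃ p, kind p = .mid ∧ pos p < pos i ∧ x p = x i then .inr (y i) else .inl (x i + 1)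

variable {pos x y kind}

theorem IntervalRules.y_ne_of_shared_x (h : IntervalRules pos x y kind) (hxy : ∀ i, x i < y i)
    (hpos : Function.Injective pos) {i j p : ι} (hij : pos i < pos j)
    (hi : kind i ≠ .bottom) (hj : kind j = .mid) (hp : kind p = .mid) (hpj : pos p < pos j)
    (hx : x p = x j) : y i ≠ y j := by
  intro hy
  have hpj' := h.mid_mid p j hpj hp hj
  simp only [Prod.lt_iff] at hpj'
  have hxp := hxy p
  have hxi := hxy i
  rcases lt_trichotomy (pos i) (pos p) with hip | hip | hip
  · cases hki : kind i
    · exact hi hki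
    · have := h.top_mid i p hip hki hp
      simp only [Prod.Lex.toLex_lt_toLex] at this
      omega
    · have := h.mid_mid i p hip hki hp
      simp only [Prod.lt_iff] at this
      omega
  · obtain rfl := hpos hip
    have := h.mid_mid i j hij hp hj
    simp only [Prod.lt_iff] at this
    omega
  · cases hki : kind i
    · exact hi hki
    · have := h.le_top p i hip hki
      have := h.top_mid i j hij hki hj
      simp only [Prod.Lex.toLex_lt_toLex] at this
      omega
    · have := h.mid_mid p i hip hp hki
      have := h.mid_mid i j hij hki hj
      simp only [Prod.lt_iff] at *
      omega

theorem IntervalRules.intervalSlot_ne (h : IntervalRules pos x y kind) (hxy : ∀ i, x i < y i)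
    (hpos : Function.Injective pos) {i j : ι} (hij : pos i < pos j) :
    intervalSlot pos x y kind i ≠ intervalSlot pos x y kind j := by
  intro heq
  have hxi := hxy i
  have hxj := hxy j
  unfold intervalSlot at heq
  cases hki : kind i <;> cases hkj : kind j <;> simp only [hki, hkj] at heq <;>
    (try split_ifs at heq) <;>
    simp only [Sum.inl.injEq, Sum.inr.injEq, reduceCtorEq] at heq
  · have := h.bottom_le i j hij hki
    omega
  · have := h.bottom_le i j hij hki
    omega
  · have := h.le_top i j hij hkj
    omega
  · obtain ⟨p, hp, hpj, hx⟩ : ∃ p, kind p = .mid ∧ pos p < pos j ∧ x p = x j := by assumption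
    exact h.y_ne_of_shared_x hxy hpos hij (by simp [hki]) hkj hp hpj hx heq
  · have := h.mid_bottom i j hij hki hkj
    simp only [Prod.Lex.toLex_lt_toLex] at this
    omega
  · have := h.le_top i j hij hkj
    omega
  · obtain ⟨p, hp, hpj, hx⟩ : ∃ p, kind p = .mid ∧ pos p < pos j ∧ x p = x j := by assumption
    exact h.y_ne_of_shared_x hxy hpos hij (by simp [hki]) hkj hp hpj hx heq
  · have hj : ¬∃ p, kind p = .mid ∧ pos p < pos j ∧ x p = x j := by assumption
    exact hj ⟨i, hki, hij, by omega⟩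

theorem IntervalRules.card_le [Fintype ι] {l : ℕ} (h : IntervalRules pos x y kind)
    (hxy : ∀ i, x i < y i) (hyl : ∀ i, y i < l) (hpos : Function.Injective pos) :
    Fintype.card ι ≤ 2 * (l - 1) := by
  have hinj : Set.InjOn (intervalSlot pos x y kind) (Finset.univ : Finset ι) := by
    intro i _ j _ hij
    by_contra hne
    rcases lt_or_gt_of_ne (hpos.ne hne) with hlt | hlt
    · exact h.intervalSlot_ne hxy hpos hlt hij
    · exact h.intervalSlot_ne hxy hpos hlt hij.symm
  have hmaps : ∀ i ∈ Finset.univ,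
      intervalSlot pos x y kind i ∈ (Finset.Icc 1 (l - 1)).disjSum (Finset.Icc 1 (l - 1)) := by
    intro i _
    have := hxy i
    have := hyl i
    unfold intervalSlot
    cases kind i <;> (try split_ifs) <;> simp <;> omega
  calc Fintype.card ι = (Finset.univ : Finset ι).card := Finset.card_univ.symm
    _ ≤ _ := Finset.card_le_card_of_injOn _ hmaps hinj
    _ = 2 * (l - 1) := by
      rw [Finset.card_disjSum, Nat.card_Icc]
      omega

end Intervals

section LevelPairs

open Finset

-- With `t = d - s`, the class of `(a, b)` holds the statistics `(r, t)` equal to `(a, b)`,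
-- `(a, a)` or `(b, b)`; a diagonal `(r, r)` goes to the class `(r, d)`, or `(0, d)` if `r = d`.
def levelPair (d r t : ℕ) : ℕ × ℕ :=
  if r < t then (r, t) else if r < d then (r, d) else (0, d)

theorem levelPair_mem {d r t : ℕ} (hd : 1 ≤ d) (hrt : r ≤ t) (htd : t ≤ d) :
    levelPair d r t ∈ {p ∈ range (d + 1) ×ˢ range (d + 1) | p.1 < p.2} := by
  unfold levelPair
  split_ifs <;> simp <;> omega

theorem eq_or_eq_of_levelPair_eq {d r t a b : ℕ} (h : levelPair d r t = (a, b)) (hrt : r ≤ t)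
    (htd : t ≤ d) : (r = a ∨ r = b) ∧ (t = a ∨ t = b) := by
  unfold levelPair at h
  split_ifs at h <;> simp only [Prod.mk.injEq] at h <;> omega

theorem card_le_of_level_stats {ι : Type*} [Fintype ι] {l d : ℕ} (hd : 1 ≤ d)
    (pos : ι → ℕ) (hpos : Function.Injective pos) (x y : ι → ℕ) (hxy : ∀ i, x i < y i)
    (hyl : ∀ i, y i < l) (r s : ι → ℕ) (hrs : ∀ i, r i + s i ≤ d)
    (hr : ∀ i j, pos i < pos j → r j ≤ r i → toLex (y i, x i) < toLex (y j, x j))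
    (hs : ∀ i j, pos i < pos j → s i ≤ s j → toLex (x i, y i) < toLex (x j, y j))
    (hcross : ∀ i j, pos i < pos j → d ≤ r i + s j → y i ≤ x j) :
    Fintype.card ι ≤ 2 * (l - 1) * (d + 1).choose 2 := by
  classical
  set pair : ι → ℕ × ℕ := fun i => levelPair d (r i) (d - s i)
  have hclass : ∀ P ∈ {p ∈ range (d + 1) ×ˢ range (d + 1) | p.1 < p.2},
      #{i | pair i = P} ≤ 2 * (l - 1) := by
    rintro ⟨a, b⟩ hab
    simp only [mem_filter] at hab
    let kind : {i // pair i = (a, b)} → IntervalKind := fun i =>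
      if r i = b then .bottom else if r i + s i = d then .top else .mid
    have hlevels : ∀ i : {i // pair i = (a, b)},
        (r i = a ∨ r i = b) ∧ (d - s i = a ∨ d - s i = b) := fun i =>
      eq_or_eq_of_levelPair_eq i.2 (by have := hrs i; omega) (Nat.sub_le _ _)
    have hkind : ∀ i, (kind i = .bottom → r i = b ∧ s i = d - b) ∧
        (kind i = .top → r i = a ∧ s i = d - a) ∧ (kind i = .mid → r i = a ∧ s i = d - b) := by
      intro i
      have := hlevels i
      have := hrs i
      simp only [kind]
      split_ifs <;> simp <;> omega
    have hbound : ∀ i : {i // pair i = (a, b)}, a ≤ r i ∧ d - b ≤ s i := fun i => by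
      have := hlevels i
      have := hrs i
      omega
    have hrules : IntervalRules (pos ∘ (↑)) (x ∘ (↑)) (y ∘ (↑)) kind := by
      refine ⟨fun i j hij hi => ?_, fun i j hij hj => ?_, fun i j hij hi hj => ?_,
        fun i j hij hi hj => ?_, fun i j hij hi hj => ?_⟩
      · have := (hkind i).1 hi
        have := hbound j
        exact hcross i j hij (by omega)
      · have := (hkind j).2.1 hj
        have := hbound i
        exact hcross i j hij (by omega)
      · have := (hkind i).2.2 hi
        have := (hkind j).2.2 hj
        have hyx := hr i j hij (by omega)
        have hxy := hs i j hij (by omega)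
        simp only [Prod.Lex.toLex_lt_toLex] at hyx hxy
        simp only [Function.comp_apply, Prod.lt_iff]
        omega
      · have := (hkind i).2.1 hi
        have := (hkind j).2.2 hj
        exact hr i j hij (by omega)
      · have := (hkind i).2.2 hi
        have := (hkind j).1 hj
        exact hs i j hij (by omega)
    rw [← Fintype.card_subtype]
    exact hrules.card_le (fun i => hxy i) (fun i => hyl i) (hpos.comp Subtype.val_injective)
  calc Fintype.card ι = #(univ : Finset ι) := card_univ.symm
    _ ≤ 2 * (l - 1) * #{p ∈ range (d + 1) ×ˢ range (d + 1) | p.1 < p.2} :=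
      card_le_mul_card_image_of_maps_to
        (fun i _ => levelPair_mem hd (by have := hrs i; omega) (Nat.sub_le _ _)) _ hclass
    _ = 2 * (l - 1) * (d + 1).choose 2 := by rw [card_product_filter_lt, card_range]

end LevelPairs

theorem injective_and_add_le_of_disjoint {ι : Type*} {pos len : ι → ℕ} (hlen : ∀ i, 0 < len i)
    (hdisj : ∀ i j, i ≠ j → pos i + len i ≤ pos j ∨ pos j + len j ≤ pos i) :
    Function.Injective pos ∧ ∀ i j, pos i < pos j → pos i + len i ≤ pos j := by
  refine ⟨fun i j hij => ?_, fun i j hij => ?_⟩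
  · by_contra hne
    have := hlen i
    have := hlen j
    rcases hdisj i j hne with h | h <;> omega
  · have := hlen j
    rcases hdisj i j (by rintro rfl; exact hij.false) with h | h <;> omega

theorem mul_choose_two_le (l n : ℕ) (hn : 2 ≤ n) :
    2 * (l - 1) * (n - 2 + 1).choose 2 ≤ (2 * l - 1) * (n - 1) * (n - 2) / 2 :=
  calc 2 * (l - 1) * (n - 2 + 1).choose 2 ≤ (2 * l - 1) * ((n - 1) * (n - 2) / 2) := by
        rw [Nat.choose_two_right, show n - 2 + 1 = n - 1 by omega,
          show n - 1 - 1 = n - 2 by omega]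
        gcongr
        omega
    _ ≤ (2 * l - 1) * (n - 1) * (n - 2) / 2 := by
        rw [Nat.mul_assoc]
        exact Nat.mul_div_le_mul_div_assoc _ _ _

section PeriodTwo

open Order

theorem exists_lt_of_noncyclic_pair {α : Type*} [LinearOrder α] {z : List α}
    (hz : Noncyclic z ∧ z.length = 2) : ∃ a b, a < b ∧ (z = [a, b] ∨ z = [b, a]) := by
  obtain ⟨hnc, hlen⟩ := hz
  match z, hlen with
  | [a, b], _ =>
    rcases lt_or_gt_of_ne (noncyclic_pair_iff.1 hnc) with h | h
    · exact ⟨a, b, h, .inl rfl⟩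
    · exact ⟨b, a, h, .inr rfl⟩

theorem isRotated_of_pair {α : Type*} {a b : α} {u v : List α} (hu : u = [a, b] ∨ u = [b, a])
    (hv : v = [a, b] ∨ v = [b, a]) : u ~r v := by
  rcases hu with rfl | rfl <;> rcases hv with rfl | rfl
  exacts [.refl _, ⟨1, rfl⟩, ⟨1, rfl⟩, .refl _]

theorem pair_lt_pair_iff {l : ℕ} {a b c d : Fin l} :
    ([a, b] : List (Fin l)) < [c, d] ↔ toLex ((a : ℕ), (b : ℕ)) < toLex ((c : ℕ), (d : ℕ)) := by
  simp [List.cons_lt_cons_iff, Prod.Lex.toLex_lt_toLex, Fin.val_inj]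

variable {l N : ℕ} (pos : Fin N → ℕ) (x y : Fin N → Fin l)

def pairRotation : Fin N × Bool → List (Fin l)
  | (i, false) => [x i, y i]
  | (i, true) => [y i, x i]

abbrev RotationOrder := IncDec (fun p : Fin N × Bool => pos p.1) (pairRotation x y)

theorem exists_occursAt_pairRotation {W : List (Fin l)} {z : Fin N → List (Fin l)}
    {m : Fin N → ℕ} {k : ℕ} (hzxy : ∀ i, z i = [x i, y i] ∨ z i = [y i, x i])
    (hocc : ∀ i, OccursAt W (wpow (z i) (m i)) (pos i)) (hm : ∀ i, k < m i)
    (p : Fin N × Bool) : ∃ o ≤ 1, OccursAt W (wpow (pairRotation x y p) k) (pos p.1 + o) := by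
  obtain ⟨i, c⟩ := p
  have hi := hocc i
  rcases hzxy i with h | h <;> rw [h] at hi <;> have := hi.wpow_pair_of_lt (hm i) <;>
    cases c <;> simp only [pairRotation] <;>
    first | exact ⟨0, zero_le_one, this.1⟩ | exact ⟨1, le_rfl, this.2⟩

theorem length_add_one_lt_of_not_stronglyNDivisible {W : List (Fin l)} {n : ℕ}
    (hndiv : ¬ StronglyNDivisible W n {z : List (Fin l) | Noncyclic z ∧ z.length = 2})
    (hxy : ∀ i, x i < y i) (occ : Fin N × Bool → ℕ)
    (hocc : ∀ p, OccursAt W (wpow (pairRotation x y p) (2 * n)) (occ p))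
    (hsep : ∀ p q : Fin N × Bool, pos p.1 < pos q.1 → occ p + 4 * n ≤ occ q)
    (s : LTSeries (RotationOrder pos x y)) : s.length + 1 < n := by
  by_contra! h
  set G : Fin n → Fin N × Bool := fun k => s (Fin.castLE h k)
  have hG : ∀ {k k' : Fin n}, k < k' →
      pos (G k).1 < pos (G k').1 ∧ pairRotation x y (G k') < pairRotation x y (G k) :=
    fun hk => IncDec.lt_iff.1 (s.strictMono (Fin.strictMono_castLE h hk))
  have hrot : ∀ p, pairRotation x y p ∈ {z : List (Fin l) | Noncyclic z ∧ z.length = 2} := by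
    rintro ⟨i, _ | _⟩ <;> simp [pairRotation, noncyclic_pair_iff, (hxy i).ne, (hxy i).ne']
  refine hndiv (stronglyNDivisible_of_occursAt (fun k => pairRotation x y (G k))
    (fun k => occ (G k)) (fun k => hrot _) (fun k => ?_) (fun k k' => ?_)
    (fun k k' hk => (hG hk).2) (fun k => hocc _) (fun k k' hk => ?_))
  · exact List.ne_nil_of_length_pos (by rw [(hrot _).2]; omega)
  · rw [(hrot _).2, (hrot _).2]
  · rw [wpow_length, (hrot _).2, show 2 * n * 2 = 4 * n by ring]
    exact hsep _ _ (hG hk).1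

theorem card_le_of_length_le_rotationOrder {d : ℕ} (hd : 1 ≤ d) (hpos : Function.Injective pos)
    (hxy : ∀ i, x i < y i) (hpairs : Function.Injective fun i => (x i, y i))
    (hβ : ∀ s : LTSeries (RotationOrder pos x y), s.length ≤ d) :
    N ≤ 2 * (l - 1) * (d + 1).choose 2 := by
  set r : Fin N → ℕ := fun i => (height (α := RotationOrder pos x y) (i, true)).toNat
  set s : Fin N → ℕ := fun i => (coheight (α := RotationOrder pos x y) (i, false)).toNat
  have hxy' : ∀ i, (x i : ℕ) < y i := fun i => hxy i
  have hpairs' : ∀ i j, i ≠ j → ¬ ((x i : ℕ) = x j ∧ (y i : ℕ) = y j) := fun i j hij h =>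
    hij (hpairs (Prod.ext (Fin.ext h.1) (Fin.ext h.2)))
  have hnot : ∀ {p q : RotationOrder pos x y}, pos p.1 < pos q.1 → ¬ p < q →
      ¬ pairRotation x y q < pairRotation x y p := fun hpq hn h => hn (IncDec.lt_iff.2 ⟨hpq, h⟩)
  rw [← Fintype.card_fin N]
  refine card_le_of_level_stats hd pos hpos (fun i => (x i : ℕ)) (fun i => (y i : ℕ)) hxy'
    (fun i => (y i).isLt) r s (fun i => ?_) (fun i j hij hrji => ?_) (fun i j hij hsij => ?_)
    (fun i j hij hdle => ?_)
  · refine height_toNat_add_coheight_toNat_le_of_forall_lt hβ fun c hc =>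
      IncDec.lt_iff.2 ⟨(IncDec.lt_iff.1 hc).1, lt_trans ?_ (IncDec.lt_iff.1 hc).2⟩
    simp only [pairRotation, pair_lt_pair_iff, Prod.Lex.toLex_lt_toLex]
    exact .inl (hxy' i)
  · have := hnot (p := (i, true)) (q := (j, true)) hij fun hlt =>
      (height_toNat_lt_of_lt hβ hlt).not_ge hrji
    simp only [pairRotation, pair_lt_pair_iff, Prod.Lex.toLex_lt_toLex] at this ⊢
    have := hpairs' i j (by rintro rfl; exact hij.false)
    omega
  · have := hnot (p := (i, false)) (q := (j, false)) hij fun hlt =>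
      (coheight_toNat_lt_of_lt hβ hlt).not_ge hsij
    simp only [pairRotation, pair_lt_pair_iff, Prod.Lex.toLex_lt_toLex] at this ⊢
    have := hpairs' i j (by rintro rfl; exact hij.false)
    omega
  · have := hnot (p := (i, true)) (q := (j, false)) hij fun hlt =>
      (height_toNat_add_coheight_toNat_lt_of_lt hβ hlt).not_ge hdle
    simp only [pairRotation, pair_lt_pair_iff, Prod.Lex.toLex_lt_toLex] at this
    omega

end PeriodTwo

theorem selective_height_period_two_upper_general (l n : ℕ) (hn : 3 ≤ n)
    (W : List (Fin l))
    (hndiv : ¬ StronglyNDivisible W n {z : List (Fin l) | Noncyclic z ∧ z.length = 2})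
    (N : ℕ) (z : Fin N → List (Fin l)) (m : Fin N → ℕ) (pos : Fin N → ℕ)
    (hz : ∀ i, Noncyclic (z i) ∧ (z i).length = 2)
    (hm : ∀ i, 2 * n < m i)
    (hocc : ∀ i, OccursAt W (wpow (z i) (m i)) (pos i))
    (hdisj : ∀ i j, i ≠ j →
      pos i + (wpow (z i) (m i)).length ≤ pos j ∨
      pos j + (wpow (z j) (m j)).length ≤ pos i)
    (hrot : ∀ i j, i ≠ j → ¬ List.IsRotated (z i) (z j)) :
    N ≤ (2 * l - 1) * (n - 1) * (n - 2) / 2 := by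
  choose x y hxy hzxy using fun i => exists_lt_of_noncyclic_pair (hz i)
  have hlen : ∀ i, (wpow (z i) (m i)).length = 2 * m i := fun i => by
    rw [wpow_length, (hz i).2, Nat.mul_comm]
  obtain ⟨hpos, hsep⟩ := injective_and_add_le_of_disjoint
    (fun i => by rw [hlen]; have := hm i; omega) hdisj
  have hpairs : Function.Injective fun i => (x i, y i) := fun i j hij => by
    by_contra hne
    obtain ⟨hx, hy⟩ := Prod.mk.inj hij
    exact hrot i j hne (isRotated_of_pair (hzxy i) (hx ▸ hy ▸ hzxy j))
  choose off hoff hocc' using exists_occursAt_pairRotation pos x y hzxy hocc hm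
  have hchain := length_add_one_lt_of_not_stronglyNDivisible pos x y hndiv hxy _ hocc'
    fun p q hpq => by
      have := hsep _ _ hpq
      rw [hlen] at this
      have := hm p.1
      have := hoff p
      omega
  calc N ≤ 2 * (l - 1) * (n - 2 + 1).choose 2 :=
        card_le_of_length_le_rotationOrder pos x y (by omega) hpos hxy hpairs fun s => by
          have := hchain s
          omega
    _ ≤ (2 * l - 1) * (n - 1) * (n - 2) / 2 := mul_choose_two_le l n (by omega)

/-- Over an `l`-letter alphabet (`l ≥ 1`, `n ≥ 3`), if `W` is not strongly
`n`-divisible over the set of noncyclic words of length 2, then any family of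
pairwise disjoint occurrences in `W` of subwords `z^m` with `z` noncyclic of
length 2, `m > 2n`, and pairwise non-rotation-equivalent periods, has at most
`(2l−1)(n−1)(n−2)/2` members. -/
theorem selective_height_period_two_upper (l n : ℕ) (hl : 1 ≤ l) (hn : 3 ≤ n)
    (W : List (Fin l)) (hW : W ≠ [])
    (hndiv : ¬ StronglyNDivisible W n {z : List (Fin l) | Noncyclic z ∧ z.length = 2})
    (N : ℕ) (z : Fin N → List (Fin l)) (m : Fin N → ℕ) (pos : Fin N → ℕ)
    (hz : ∀ i, Noncyclic (z i) ∧ (z i).length = 2)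
    (hm : ∀ i, 2 * n < m i)
    (hocc : ∀ i, OccursAt W (wpow (z i) (m i)) (pos i))
    (hdisj : ∀ i j, i ≠ j →
      pos i + (wpow (z i) (m i)).length ≤ pos j ∨
      pos j + (wpow (z j) (m j)).length ≤ pos i)
    (hrot : ∀ i j, i ≠ j → ¬ List.IsRotated (z i) (z j)) :
    N ≤ (2 * l - 1) * (n - 1) * (n - 2) / 2 :=
  selective_height_period_two_upper_general l n hn W hndiv N z m pos hz hm hocc hdisj hrot
end

section
/- For all integers t, l, n ≥ 1, beth(2t, l, n) ≤ beth(t, l², n). -/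
/-- The sequence `c` of noncyclic words of length `t` over an `l`-letter alphabet,
no two of which are cyclic rotations of one another, is `n`-good: the partial
order on pairs `(i, r)` given by `(i₁,r₁) ≺ (i₂,r₂)` iff `i₁ < i₂` and the
rotation of `c i₁` by `r₁` is lexicographically smaller than the rotation of
`c i₂` by `r₂`, has no antichain of size `n`. -/
def IsGoodSeq (t l n : ℕ) {N : ℕ} (c : Fin N → List (Fin l)) : Prop :=
  (∀ i, Noncyclic (c i)) ∧
  (∀ i, (c i).length = t) ∧
  (∀ i j, i ≠ j → ¬ List.IsRotated (c i) (c j)) ∧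
  ¬ ∃ g : Fin n → Fin N × Fin t, Function.Injective g ∧
      ∀ a b : Fin n,
        ¬ ((g a).1 < (g b).1 ∧
          List.Lex (· < ·) ((c (g a).1).rotate (g a).2) ((c (g b).1).rotate (g b).2))

/-- `beth t l n` is the maximal length of an `n`-good sequence of noncyclic
words of length `t` over an `l`-letter alphabet, no two of which are cyclic
rotations of one another. -/
noncomputable def beth (t l n : ℕ) : ℕ :=
  sSup {N | ∃ c : Fin N → List (Fin l), IsGoodSeq t l n c}

section Pairing

variable {α β : Type*}

def pairLetters (f : α → α → β) : List α → List β
  | [] => []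
  | [_] => []
  | a :: b :: w => f a b :: pairLetters f w

def unpairLetters (g : β → α × α) (w : List β) : List α :=
  w.flatMap fun x => [(g x).1, (g x).2]

variable (f : α → α → β)

lemma even_length_of_cons_cons {a b : α} {w : List α} (h : Even (a :: b :: w).length) :
    Even w.length := by
  simpa [parity_simps] using h

lemma length_pairLetters : ∀ w : List α, (pairLetters f w).length = w.length / 2
  | [] | [_] => by simp [pairLetters]
  | _ :: _ :: w => by simp only [pairLetters, List.length_cons, length_pairLetters w]; omega

lemma pairLetters_append : ∀ {u : List α}, Even u.length → ∀ v : List α,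
    pairLetters f (u ++ v) = pairLetters f u ++ pairLetters f v
  | [], _, _ => rfl
  | [_], hu, _ => by simp at hu
  | _ :: _ :: u, hu, v => by
    simp only [List.cons_append, pairLetters, pairLetters_append (even_length_of_cons_cons hu) v]

lemma pairLetters_rotate_of_le {w : List α} (hw : Even w.length) {r : ℕ}
    (hr : 2 * r ≤ w.length) : (pairLetters f w).rotate r = pairLetters f (w.rotate (2 * r)) := by
  obtain ⟨u, v, rfl, hu⟩ : ∃ u v, w = u ++ v ∧ u.length = 2 * r :=
    ⟨w.take (2 * r), w.drop (2 * r), (List.take_append_drop _ w).symm, by simpa using hr⟩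
  have hu_even : Even u.length := ⟨r, by omega⟩
  have hv_even : Even v.length := by simpa [parity_simps, hu_even] using hw
  have hpu : (pairLetters f u).length = r := by rw [length_pairLetters, hu]; omega
  have hrot_pair :
      (pairLetters f u ++ pairLetters f v).rotate r = pairLetters f v ++ pairLetters f u :=
    hpu ▸ List.rotate_append_length_eq _ _
  have hrot : (u ++ v).rotate (2 * r) = v ++ u := hu ▸ List.rotate_append_length_eq _ _
  rw [pairLetters_append f hu_even, hrot_pair, hrot, pairLetters_append f hv_even]

lemma pairLetters_rotate {w : List α} (hw : Even w.length) (r : ℕ) :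
    (pairLetters f w).rotate r = pairLetters f (w.rotate (2 * r)) := by
  obtain ⟨k, hk⟩ := hw
  rcases Nat.eq_zero_or_pos k with rfl | hk_pos
  · simp [List.eq_nil_of_length_eq_zero (show w.length = 0 by omega), pairLetters]
  have hlen : (pairLetters f w).length = k := by rw [length_pairLetters]; omega
  have h2k : 2 * r % w.length = 2 * (r % k) := by rw [hk, ← two_mul, Nat.mul_mod_mul_left]
  have hmod : 2 * (r % k) ≤ w.length := by have := Nat.mod_lt r hk_pos; omega
  rw [← List.rotate_mod, hlen, pairLetters_rotate_of_le f ⟨k, hk⟩ hmod, ← h2k,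
    List.rotate_mod]

variable {f} {g : β → α × α}

lemma unpairLetters_pairLetters (hg : ∀ a b, g (f a b) = (a, b)) :
    ∀ {w : List α}, Even w.length → unpairLetters g (pairLetters f w) = w
  | [], _ => rfl
  | [_], hw => by simp at hw
  | a :: b :: w, hw => by
    have ih := unpairLetters_pairLetters hg (even_length_of_cons_cons hw)
    simp only [unpairLetters, pairLetters, List.flatMap_cons, hg] at ih ⊢
    rw [ih]; rfl

lemma unpairLetters_wpow (v : List β) (k : ℕ) :
    unpairLetters g (wpow v k) = wpow (unpairLetters g v) k := by
  induction k with
  | zero => rfl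
  | succ k ih => simp only [wpow, unpairLetters, List.flatMap_append] at ih ⊢; rw [ih]

lemma eq_of_pairLetters_eq (hg : ∀ a b, g (f a b) = (a, b)) {u v : List α} (hu : Even u.length)
    (hv : Even v.length) (h : pairLetters f u = pairLetters f v) : u = v := by
  rw [← unpairLetters_pairLetters hg hu, h, unpairLetters_pairLetters hg hv]

lemma noncyclic_pairLetters (hg : ∀ a b, g (f a b) = (a, b)) {w : List α} (hw : Noncyclic w)
    (he : Even w.length) : Noncyclic (pairLetters f w) := by
  refine ⟨?_, fun v k hk h => hw.2 (unpairLetters g v) k hk ?_⟩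
  · have h2 : 2 ≤ w.length := by
      rcases he with ⟨k, hk⟩; have := List.length_pos_iff.2 hw.1; omega
    rw [← List.length_pos_iff, length_pairLetters]; omega
  · rw [← unpairLetters_pairLetters hg he, h, unpairLetters_wpow]

lemma isRotated_of_pairLetters (hg : ∀ a b, g (f a b) = (a, b)) {u v : List α}
    (hu : Even u.length) (hv : Even v.length) (h : pairLetters f u ~r pairLetters f v) :
    u ~r v := by
  obtain ⟨r, hr⟩ := h
  rw [pairLetters_rotate f hu] at hr
  exact ⟨2 * r, eq_of_pairLetters_eq hg (by simpa using hu) hv hr⟩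

lemma lex_pairLetters [LT α] [LT β]
    (hf : ∀ a b c d, a < c ∨ a = c ∧ b < d → f a b < f c d) :
    ∀ {u v : List α}, u.length = v.length → Even u.length →
      List.Lex (· < ·) u v → List.Lex (· < ·) (pairLetters f u) (pairLetters f v)
  | [], [], _, _, h => by cases h
  | [_], _, _, hu, _ => by simp at hu
  | [], _ :: _, hlen, _, _ | _ :: _ :: _, [], hlen, _, _ | _ :: _ :: _, [_], hlen, _, _ => by
    simp at hlen
  | a :: b :: u, c :: d :: v, hlen, hu, h => by
    cases h with
    | rel hac => exact .rel (hf _ _ _ _ (.inl hac))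
    | cons h =>
      cases h with
      | rel hbd => exact .rel (hf _ _ _ _ (.inr ⟨rfl, hbd⟩))
      | cons h =>
        exact .cons (lex_pairLetters hf (by simpa using hlen) (even_length_of_cons_cons hu) h)

end Pairing

lemma card_le_of_isGoodSeq {t L n N : ℕ} {c : Fin N → List (Fin L)} (hc : IsGoodSeq t L n c) :
    N ≤ L ^ t := by
  have hinj :
      Function.Injective (fun i => ⟨c i, hc.2.1 i⟩ : Fin N → List.Vector (Fin L) t) := by
    intro i j hij
    by_contra hne
    have hcij : c i = c j := congrArg Subtype.val hij
    exact hc.2.2.1 i j hne (hcij ▸ List.IsRotated.refl _)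
  simpa using Fintype.card_le_of_injective (β := List.Vector (Fin L) t) _ hinj

lemma beth_le_beth_of_forall_isGoodSeq {t l n t' l' n' : ℕ}
    (h : ∀ N (c : Fin N → List (Fin l)), IsGoodSeq t l n c →
      ∃ c' : Fin N → List (Fin l'), IsGoodSeq t' l' n' c') :
    beth t l n ≤ beth t' l' n' := by
  rcases Set.eq_empty_or_nonempty {N | ∃ c : Fin N → List (Fin l), IsGoodSeq t l n c}
    with hempty | hne
  · simp [beth, hempty] -- `sSup ∅ = 0` in `ℕ`
  refine csSup_le_csSup ⟨l' ^ t', ?_⟩ hne fun N ⟨c, hc⟩ => h N c hc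
  rintro N ⟨c, hc⟩
  exact card_le_of_isGoodSeq hc

lemma isGoodSeq_pairLetters {t l L n N : ℕ} (e : Fin l ×ₗ Fin l ≃o Fin L)
    {c : Fin N → List (Fin l)} (hc : IsGoodSeq (2 * t) l n c) :
    IsGoodSeq t L n fun i => pairLetters (fun a b => e (toLex (a, b))) (c i) := by
  set f : Fin l → Fin l → Fin L := fun a b => e (toLex (a, b))
  set g : Fin L → Fin l × Fin l := fun x => ofLex (e.symm x)
  have hg : ∀ a b, g (f a b) = (a, b) := by simp [f, g]
  have hf : ∀ a b c d, a < c ∨ a = c ∧ b < d → f a b < f c d := fun _ _ _ _ h =>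
    e.strictMono (Prod.Lex.toLex_lt_toLex.2 h)
  obtain ⟨hnc, hlen, hrot, hanti⟩ := hc
  have heven : ∀ i, Even (c i).length := fun i => ⟨t, by rw [hlen i]; ring⟩
  refine ⟨fun i => noncyclic_pairLetters hg (hnc i) (heven i),
    fun i => by rw [length_pairLetters, hlen i]; omega,
    fun i j hij h => hrot i j hij (isRotated_of_pairLetters hg (heven i) (heven j) h), ?_⟩
  rintro ⟨p, hp_inj, hp_anti⟩
  refine hanti ⟨fun a => ((p a).1, ⟨2 * (p a).2, by omega⟩), fun a b hab => ?_,
    fun a b ⟨hlt, hlex⟩ => ?_⟩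
  · simp only [Prod.mk.injEq, Fin.mk.injEq] at hab
    exact hp_inj (Prod.ext hab.1 (Fin.ext (by omega)))
  · refine hp_anti a b ⟨hlt, ?_⟩
    rw [pairLetters_rotate f (heven _), pairLetters_rotate f (heven _)]
    exact lex_pairLetters hf (by simp [hlen]) (by simpa using heven _) hlex

theorem beth_double_period_general (t l n : ℕ) :
    beth (2 * t) l n ≤ beth t (l ^ 2) n :=
  beth_le_beth_of_forall_isGoodSeq fun _ _ hc =>
    have hcard : Fintype.card (Fin l ×ₗ Fin l) = l ^ 2 := by rw [Fintype.card_lex]; simp [sq]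
    ⟨_, isGoodSeq_pairLetters (Fintype.orderIsoFinOfCardEq _ hcard).symm hc⟩

/-- For all integers `t, l, n ≥ 1`, `beth(2t, l, n) ≤ beth(t, l², n)`. -/
theorem beth_double_period (t l n : ℕ) (ht : 1 ≤ t) (hl : 1 ≤ l) (hn : 1 ≤ n) :
    beth (2 * t) l n ≤ beth t (l ^ 2) n :=
  beth_double_period_general t l n
end

section
/- For all integers t, l, n ≥ 1, beth(t, l, n) ≤ beth(2^s, l+1, 2^s·(n−1)+1), where s = ⌈log₂ t⌉. -/
/-!
Append `m` copies of a new letter `T = l + 1`, larger than every old letter, to each word.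
In a padded word `u T^m` (with `u` nonempty and `T`-free, `m > 0`) no `T` is followed by an old
letter, and a factorisation `xy` with `x, y` nonempty for which `yx` keeps this property would
force all letters to be `T`. Hence padding preserves primitivity and non-conjugacy. A rotation
by `r` of padded words compares like the rotation by `r` of the original words when `r < t`,
and like the words themselves when `r ≥ t`; so pigeonholing an antichain of size
`(t + m)(n - 1) + 1` of padded rotations on the rotation amount gives an antichain of size `n`
of the original rotations.
-/

open List Function

section Words

variable {α : Type*}

theorem List.forall_of_pairwise_imp_append_comm {P : α → Prop} {x y : List α}
    (hxy : (x ++ y).Pairwise (fun a b => P a → P b))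
    (hyx : (y ++ x).Pairwise (fun a b => P a → P b))
    (hx : x ≠ []) (hy : y ≠ []) (hP : ∃ a ∈ x ++ y, P a) : ∀ a ∈ x ++ y, P a := by
  have hX : (∃ a ∈ x, P a) → ∀ b ∈ y, P b := fun ⟨a, ha, hPa⟩ b hb =>
    (pairwise_append.1 hxy).2.2 a ha b hb hPa
  have hY : (∃ b ∈ y, P b) → ∀ a ∈ x, P a := fun ⟨b, hb, hPb⟩ a ha =>
    (pairwise_append.1 hyx).2.2 b hb a ha hPb
  obtain ⟨a₀, ha₀⟩ := exists_mem_of_ne_nil x hx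
  obtain ⟨b₀, hb₀⟩ := exists_mem_of_ne_nil y hy
  have hallX : ∀ a ∈ x, P a := by
    obtain ⟨c, hc, hPc⟩ := hP
    rcases mem_append.1 hc with hc | hc
    · exact hY ⟨b₀, hb₀, hX ⟨c, hc, hPc⟩ b₀ hb₀⟩
    · exact hY ⟨c, hc, hPc⟩
  have hallY := hX ⟨a₀, ha₀, hallX a₀ ha₀⟩
  intro c hc
  rcases mem_append.1 hc with hc | hc
  exacts [hallX c hc, hallY c hc]

theorem List.append_lt_append_iff_of_length_eq [LT α] {u₁ u₂ v₁ v₂ : List α}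
    (h : u₁.length = u₂.length) : u₁ ++ v₁ < u₂ ++ v₂ ↔ u₁ < u₂ ∨ u₁ = u₂ ∧ v₁ < v₂ := by
  induction u₁ generalizing u₂ with
  | nil =>
    rw [eq_nil_of_length_eq_zero h.symm]
    simp
  | cons a u₁ ih =>
    obtain ⟨b, u₂, rfl⟩ := exists_cons_of_length_eq_add_one h.symm
    simp only [cons_append, cons_lt_cons_iff, ih (Nat.succ.inj h), cons.injEq]
    tauto

theorem wpow_succ (v : List α) : ∀ k, wpow v (k + 1) = wpow v k ++ v
  | 0 => by simp [wpow]
  | k + 1 => by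
    show v ++ wpow v (k + 1) = (v ++ wpow v k) ++ v
    rw [wpow_succ v k, append_assoc]

theorem wpow_nil : ∀ k, wpow ([] : List α) k = []
  | 0 => rfl
  | k + 1 => wpow_nil k

theorem wpow_ne_nil {v : List α} (hv : v ≠ []) {k : ℕ} (hk : k ≠ 0) : wpow v k ≠ [] := by
  obtain ⟨k, rfl⟩ := Nat.exists_eq_succ_of_ne_zero hk
  exact append_ne_nil_of_left_ne_nil hv _

theorem map_wpow {β : Type*} (f : α → β) (v : List α) :
    ∀ k, (wpow v k).map f = wpow (v.map f) k
  | 0 => rfl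
  | k + 1 => by rw [wpow, wpow, map_append, map_wpow f v k]

theorem Noncyclic.map {β : Type*} {f : α → β} (hf : Injective f) {w : List α}
    (hw : Noncyclic w) : Noncyclic (w.map f) := by
  refine ⟨by simpa using hw.1, fun v k hk hwv => ?_⟩
  obtain ⟨k, rfl⟩ : ∃ j, k = j + 1 := ⟨k - 1, by omega⟩
  have hv : (w.take v.length).map f = v := by
    rw [map_take, hwv, wpow, take_left]
  refine hw.2 (w.take v.length) (k + 1) hk (map_injective_iff.2 hf ?_)
  rw [map_wpow, hv, hwv]

end Words

section Padding

variable {l : ℕ}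

def padWord (m : ℕ) (w : List (Fin l)) : List (Fin (l + 1)) :=
  w.map Fin.castSucc ++ replicate m (Fin.last l)

theorem length_padWord (m : ℕ) (w : List (Fin l)) : (padWord m w).length = w.length + m := by
  simp [padWord]

theorem padWord_injective (m : ℕ) : Injective (padWord (l := l) m) := fun _ _ h =>
  map_injective_iff.2 (Fin.castSucc_injective l) (append_cancel_right h)

theorem pairwise_padWord (m : ℕ) (w : List (Fin l)) :
    (padWord m w).Pairwise (fun a b => a = Fin.last l → b = Fin.last l) := by
  simp [padWord, pairwise_append, pairwise_map, Fin.castSucc_ne_last, pairwise_replicate,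
    pairwise_of_forall]

theorem eq_nil_or_eq_nil_of_padWord_eq_append {m : ℕ} (hm : 0 < m) {w : List (Fin l)} (hw : w ≠ [])
    {x y : List (Fin (l + 1))} (hxy : padWord m w = x ++ y)
    (hyx : (y ++ x).Pairwise (fun a b => a = Fin.last l → b = Fin.last l)) :
    x = [] ∨ y = [] := by
  by_contra! h
  have hlast : ∃ a ∈ x ++ y, a = Fin.last l :=
    ⟨_, hxy ▸ mem_append_right _ (mem_replicate.2 ⟨hm.ne', rfl⟩), rfl⟩
  obtain ⟨a, ha⟩ := exists_mem_of_ne_nil w hw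
  have := forall_of_pairwise_imp_append_comm (hxy ▸ pairwise_padWord m w) hyx h.1 h.2 hlast
    (Fin.castSucc a) (hxy ▸ mem_append_left _ (mem_map_of_mem ha))
  exact Fin.castSucc_ne_last a this

theorem Noncyclic.padWord {w : List (Fin l)} (hw : Noncyclic w) (m : ℕ) :
    Noncyclic (padWord m w) := by
  rcases m.eq_zero_or_pos with rfl | hm
  · simpa [_root_.padWord] using hw.map (Fin.castSucc_injective l)
  refine ⟨by simp [_root_.padWord, hw.1], fun v k hk hvk => ?_⟩
  obtain ⟨k, rfl⟩ : ∃ j, k = j + 1 := ⟨k - 1, by omega⟩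
  have hv : v ≠ [] := by
    rintro rfl
    simp [_root_.padWord, hw.1, wpow_nil] at hvk
  have hsplit : _root_.padWord m w = v ++ wpow v k := hvk
  rcases eq_nil_or_eq_nil_of_padWord_eq_append hm hw.1 hsplit
      (hvk.trans (wpow_succ v k) ▸ pairwise_padWord m w)
    with h | h
  · exact hv h
  · exact wpow_ne_nil hv (by omega) h

theorem List.IsRotated.of_padWord {m : ℕ} {u w : List (Fin l)} (hu : u ≠ [])
    (h : padWord m u ~r padWord m w) : u ~r w := by
  obtain ⟨r, hr⟩ := h
  rcases m.eq_zero_or_pos with rfl | hm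
  · refine ⟨r, map_injective_iff.2 (Fin.castSucc_injective l) ?_⟩
    simpa [padWord, map_rotate] using hr
  rw [rotate_eq_drop_append_take_mod] at hr
  set k := r % (padWord m u).length
  have hsplit := (take_append_drop k (padWord m u)).symm
  have heq : padWord m u = padWord m w := by
    rcases eq_nil_or_eq_nil_of_padWord_eq_append hm hu hsplit (hr ▸ pairwise_padWord m w)
      with h | h <;> rw [← hr] <;> simpa [h] using hsplit
  rw [padWord_injective m heq]

theorem rotate_padWord_of_le {m r : ℕ} {w : List (Fin l)} (hr : r ≤ w.length) :
    (padWord m w).rotate r =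
      (w.drop r).map Fin.castSucc ++ (replicate m (Fin.last l) ++ (w.take r).map Fin.castSucc) := by
  have h : padWord m w =
      (w.take r).map Fin.castSucc ++ ((w.drop r).map Fin.castSucc ++ replicate m (Fin.last l)) := by
    rw [padWord, ← append_assoc, ← map_append, take_append_drop]
  rw [h]
  convert (rotate_append_length_eq ((w.take r).map Fin.castSucc) _).trans (append_assoc _ _ _)
    using 2
  simp [hr]

theorem rotate_padWord_of_ge {m r : ℕ} {w : List (Fin l)} (hr : w.length ≤ r)
    (hrm : r ≤ w.length + m) :
    (padWord m w).rotate r = replicate (w.length + m - r) (Fin.last l) ++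
      (w.map Fin.castSucc ++ replicate (r - w.length) (Fin.last l)) := by
  have h : padWord m w = (w.map Fin.castSucc ++ replicate (r - w.length) (Fin.last l)) ++
      replicate (w.length + m - r) (Fin.last l) := by
    rw [padWord, append_assoc, ← replicate_add]
    congr 2
    omega
  rw [h]
  convert rotate_append_length_eq
    (w.map Fin.castSucc ++ replicate (r - w.length) (Fin.last l)) _ using 2
  simp
  omega

theorem exists_rotate_lt_imp_rotate_padWord_lt {t m r : ℕ} (ht : 0 < t) (hr : r < t + m) :
    ∃ q < t, ∀ u w : List (Fin l), u.length = t → w.length = t →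
      u.rotate q < w.rotate q → (padWord m u).rotate r < (padWord m w).rotate r := by
  have hcast : ∀ a b : Fin l, a < b → Fin.castSucc a < Fin.castSucc b := fun _ _ => id
  rcases lt_or_ge r t with hrt | htr
  · refine ⟨r, hrt, fun u w hu hw huw => ?_⟩
    rw [rotate_eq_drop_append_take (by omega), rotate_eq_drop_append_take (by omega),
      append_lt_append_iff_of_length_eq (by simp [hu, hw])] at huw
    rw [rotate_padWord_of_le (by omega), rotate_padWord_of_le (by omega),
      append_lt_append_iff_of_length_eq (by simp [hu, hw])]
    rcases huw with h | ⟨h, h'⟩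
    · exact .inl (List.map_lt hcast h)
    · exact .inr ⟨by rw [h], append_left_lt (List.map_lt hcast h')⟩
  · refine ⟨0, ht, fun u w hu hw huw => ?_⟩
    rw [rotate_zero, rotate_zero] at huw
    rw [rotate_padWord_of_ge (by omega) (by omega), rotate_padWord_of_ge (by omega) (by omega),
      hu, hw]
    exact append_left_lt ((append_lt_append_iff_of_length_eq (by simp [hu, hw])).2
      (.inl (List.map_lt hcast huw)))

end Padding

/-- The last clause of `IsGoodSeq t l n c` is `¬ HasRotationAntichain t n c`. -/
def HasRotationAntichain {α : Type*} [LT α] (t n : ℕ) {N : ℕ} (c : Fin N → List α) : Prop :=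
  ∃ g : Fin n → Fin N × Fin t, Function.Injective g ∧
    ∀ a b : Fin n,
      ¬ ((g a).1 < (g b).1 ∧
        List.Lex (· < ·) ((c (g a).1).rotate (g a).2) ((c (g b).1).rotate (g b).2))

theorem Fintype.exists_injective_into_fiber_of_mul_lt_card {β γ : Type*} [Fintype β] [Fintype γ]
    [DecidableEq γ] (f : β → γ) {n : ℕ} (h : card γ * (n - 1) < card β) :
    ∃ y, ∃ e : Fin n → β, Injective e ∧ ∀ a, f (e a) = y := by
  obtain ⟨y, hy⟩ := exists_lt_card_fiber_of_mul_lt_card f h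
  obtain ⟨e⟩ := Function.Embedding.nonempty_of_card_le
    (α := Fin n) (β := {b // f b = y}) (by rw [card_fin, card_subtype]; omega)
  exact ⟨y, fun a => e a, Subtype.val_injective.comp e.injective, fun a => (e a).2⟩

theorem HasRotationAntichain.of_padWord {l t m n N : ℕ} {c : Fin N → List (Fin l)}
    (hlen : ∀ i, (c i).length = t) (hne : ∀ i, c i ≠ [])
    (h : HasRotationAntichain (t + m) ((t + m) * (n - 1) + 1) fun i => padWord m (c i)) :
    HasRotationAntichain t n c := by
  obtain ⟨g, hg, hanti⟩ := h
  have ht : 0 < t := hlen (g 0).1 ▸ length_pos_iff.2 (hne _)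
  obtain ⟨r, e, he, hr⟩ :=
    Fintype.exists_injective_into_fiber_of_mul_lt_card (fun x => (g x).2) (n := n) (by simp)
  obtain ⟨q, hq, hlt⟩ := exists_rotate_lt_imp_rotate_padWord_lt (m := m) ht r.2
  refine ⟨fun a => ((g (e a)).1, ⟨q, hq⟩), fun a b hab => ?_, fun a b ⟨hab, hlex⟩ => ?_⟩
  · exact he (hg (Prod.ext (Prod.mk.inj hab).1 ((hr a).trans (hr b).symm)))
  · refine hanti (e a) (e b) ⟨hab, ?_⟩
    rw [hr a, hr b]
    exact hlt _ _ (hlen _) (hlen _) hlex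

theorem IsGoodSeq.padWord {t l n N m : ℕ} {c : Fin N → List (Fin l)} (hc : IsGoodSeq t l n c) :
    IsGoodSeq (t + m) (l + 1) ((t + m) * (n - 1) + 1) fun i => _root_.padWord m (c i) := by
  obtain ⟨hcyc, hlen, hrot, hanti⟩ := hc
  refine ⟨fun i => (hcyc i).padWord m, fun i => by rw [length_padWord, hlen], ?_, ?_⟩
  · exact fun i j hij h => hrot i j hij (h.of_padWord (hcyc i).1)
  · exact fun h => hanti (HasRotationAntichain.of_padWord hlen (fun i => (hcyc i).1) h)

theorem bddAbove_setOf_isGoodSeq (t l n : ℕ) :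
    BddAbove {N | ∃ c : Fin N → List (Fin l), IsGoodSeq t l n c} := by
  refine ⟨l ^ t, ?_⟩
  rintro N ⟨c, -, hlen, hrot, -⟩
  have hc : Injective c := fun i j h =>
    by_contra fun hij => hrot i j hij (h ▸ IsRotated.refl _)
  have hinj : Injective (β := List.Vector (Fin l) t) fun i => ⟨c i, hlen i⟩ :=
    fun i j hij => hc (congrArg Subtype.val hij)
  simpa using Fintype.card_le_of_injective _ hinj

theorem beth_le_beth_add (t l n m : ℕ) :
    beth t l n ≤ beth (t + m) (l + 1) ((t + m) * (n - 1) + 1) :=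
  csSup_le' fun _ ⟨_, hc⟩ => le_csSup (bddAbove_setOf_isGoodSeq _ _ _) ⟨_, hc.padWord⟩

theorem beth_pow_two_period_general (t l n s : ℕ) (hs : t ≤ 2 ^ s) :
    beth t l n ≤ beth (2 ^ s) (l + 1) (2 ^ s * (n - 1) + 1) := by
  obtain ⟨m, hm⟩ := Nat.exists_eq_add_of_le hs
  rw [hm]
  exact beth_le_beth_add t l n m

/-- For all integers `t, l, n ≥ 1`,
`beth(t, l, n) ≤ beth(2^s, l+1, 2^s·(n−1)+1)` where `s = ⌈log₂ t⌉` is the least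
integer with `2^s ≥ t`. -/
theorem beth_pow_two_period (t l n s : ℕ) (ht : 1 ≤ t) (hl : 1 ≤ l) (hn : 1 ≤ n)
    (hs : t ≤ 2 ^ s) (hs_min : ∀ s' : ℕ, t ≤ 2 ^ s' → s ≤ s') :
    beth t l n ≤ beth (2 ^ s) (l + 1) (2 ^ s * (n - 1) + 1) :=
  beth_pow_two_period_general t l n s hs
end

section
/- For all integers l ≥ 1 and n ≥ 2, and every integer t with 1 ≤ t < n, one has beth(t, l, n) < 4(l+1)^n·n^4. -/
/-!
The words of an `n`-good sequence of length-`t` words are pairwise distinct (distinct indices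
carry words that are not even rotations of each other), so `beth(t, l, n) ≤ l^t`, which is
already far below `4(l+1)^n·n^4` once `t < n`.
-/

theorem IsGoodSeq.injective {t l n N : ℕ} {c : Fin N → List (Fin l)} (hc : IsGoodSeq t l n c) :
    Function.Injective c := by
  intro i j hij
  by_contra hne
  exact hc.2.2.1 i j hne (hij ▸ List.IsRotated.refl _)

theorem IsGoodSeq.card_le {t l n N : ℕ} {c : Fin N → List (Fin l)} (hc : IsGoodSeq t l n c) :
    N ≤ l ^ t := by
  have hinj : Function.Injective (fun i => ⟨c i, hc.2.1 i⟩ : Fin N → List.Vector (Fin l) t) :=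
    fun i j hij => hc.injective (congrArg Subtype.val hij)
  simpa [card_vector] using Fintype.card_le_of_injective (β := List.Vector (Fin l) t) _ hinj

theorem beth_le_pow (t l n : ℕ) : beth t l n ≤ l ^ t :=
  csSup_le' fun _ ⟨_, hc⟩ => hc.card_le

theorem beth_upper_bound_general (t l n : ℕ) (htn : t < n) :
    beth t l n < 4 * (l + 1) ^ n * n ^ 4 := by
  have hn : 0 < n := by omega
  have hpos : 0 < (l + 1) ^ n * n ^ 4 := by positivity
  calc beth t l n ≤ l ^ t := beth_le_pow t l n
    _ ≤ (l + 1) ^ t := Nat.pow_le_pow_left l.le_succ t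
    _ ≤ (l + 1) ^ n := Nat.pow_le_pow_right l.succ_pos htn.le
    _ ≤ (l + 1) ^ n * n ^ 4 := Nat.le_mul_of_pos_right _ (by positivity)
    _ < 4 * (l + 1) ^ n * n ^ 4 := by rw [mul_assoc]; omega

/-- For all integers `l ≥ 1`, `n ≥ 2` and `1 ≤ t < n`,
`beth(t, l, n) < 4(l+1)^n·n^4`. -/
theorem beth_upper_bound (t l n : ℕ) (hl : 1 ≤ l) (hn : 2 ≤ n)
    (ht : 1 ≤ t) (htn : t < n) :
    beth t l n < 4 * (l + 1) ^ n * n ^ 4 :=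
  beth_upper_bound_general t l n htn
end

section
/- For all integers l ≥ 1 and n ≥ 2, beth(2, l, n) ≤ (2l−1)(n−1)(n−2)/2. -/
/-! An antichain of `≺` is exactly a chain of the points `(i, toDual (rotation))` in the
product order on `Fin N × (List (Fin l))ᵒᵈ`, so, as in Mirsky's theorem, the heights of these
points form a strictly monotone labelling with fewer than `n - 1` values. The two rotations
`[a, b]` and `[b, a]` of a word get distinct labels, and if words `i < j` carry the same pair of
labels, then each rotation of `c i` is smaller than the rotation of `c j` with the same label,
which forces the letter sum `a + b` to increase. So a word is determined by its letter sum
(`2l - 1` values) and its pair of labels (`(n - 1).choose 2` values). -/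

open Finset OrderDual

theorem exists_strictMonoOn_lt_of_chain_card_le {α : Type*} [PartialOrder α] {s : Set α}
    {m : ℕ} (hs : ∀ c : Finset α, ↑c ⊆ s → IsChain (· ≤ ·) (c : Set α) → c.card ≤ m) :
    ∃ f : α → ℕ, (∀ x ∈ s, f x < m) ∧ StrictMonoOn f s := by
  classical
  have hheight (x : s) : Order.height x < m := by
    by_contra! hm
    obtain ⟨p, -, hp⟩ := Order.exists_series_of_le_height x hm
    have hinj : Function.Injective fun k => (p k : α) :=
      Subtype.val_injective.comp p.strictMono.injective
    have hchain : IsChain (· ≤ ·) (Set.range fun k => (p k : α)) :=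
      (Subtype.mono_coe _ |>.comp p.monotone).isChain_range
    have := hs (univ.map ⟨_, hinj⟩) (by simp [Set.range_subset_iff]) (by simpa using hchain)
    simp [hp] at this
  have htoNat (x : s) : (Order.height x).toNat = Order.height x :=
    ENat.natCast_toNat (hheight x).ne_top
  refine ⟨fun x => if hx : x ∈ s then (Order.height (⟨x, hx⟩ : s)).toNat else 0,
    fun x hx => ?_, fun x hx y hy hxy => ?_⟩
  · have := hheight ⟨x, hx⟩
    rw [← htoNat] at this
    simpa [hx] using this
  · have := Order.height_strictMono (show (⟨x, hx⟩ : s) < ⟨y, hy⟩ from hxy)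
      (hheight _).ne_top.lt_top
    rw [← htoNat ⟨x, hx⟩, ← htoNat ⟨y, hy⟩] at this
    simpa [hx, hy] using this

theorem card_lt_of_not_exists_injective {α : Type*} {r : α → α → Prop} {n : ℕ}
    (h : ¬ ∃ g : Fin n → α, Function.Injective g ∧ ∀ a b, ¬ r (g a) (g b))
    {S : Finset α} (hS : ∀ p ∈ S, ∀ q ∈ S, ¬ r p q) : S.card < n := by
  by_contra! hn
  let g : Fin n ↪ S := (Fin.castLEEmb hn).trans S.equivFin.symm.toEmbedding
  exact h ⟨fun a => g a, Subtype.val_injective.comp g.injective,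
    fun a b => hS _ (g a).2 _ (g b).2⟩

theorem exists_label_of_antichain_card_le {ι ρ β : Type*} [LinearOrder ι] [LinearOrder β]
    (w : ι × ρ → β) {m : ℕ}
    (hanti : ∀ S : Finset (ι × ρ), (∀ p ∈ S, ∀ q ∈ S, ¬ (p.1 < q.1 ∧ w p < w q)) →
      S.card ≤ m) :
    ∃ f : ι × ρ → ℕ, (∀ p, f p < m) ∧
      (∀ i r s, w (i, r) < w (i, s) → f (i, s) < f (i, r)) ∧
      ∀ p q, p.1 < q.1 → f p = f q → w p < w q := by
  classical
  let ψ : ι × ρ → ι × βᵒᵈ := fun p => (p.1, toDual (w p))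
  have hchain (c : Finset (ι × βᵒᵈ)) (hc : ↑c ⊆ Set.range ψ)
      (hc' : IsChain (· ≤ ·) (c : Set (ι × βᵒᵈ))) : c.card ≤ m := by
    rw [← Set.image_univ, subset_set_image_iff] at hc
    obtain ⟨S, -, rfl⟩ := hc
    refine card_image_le.trans (hanti S fun p hp q hq ⟨hpq, hw⟩ => ?_)
    rcases hc'.total (mem_image_of_mem ψ hp) (mem_image_of_mem ψ hq) with h | h
    · exact (Prod.mk_le_mk.1 h).2.not_gt hw
    · exact (Prod.mk_le_mk.1 h).1.not_gt hpq
  obtain ⟨f, hf_lt, hf_mono⟩ := exists_strictMonoOn_lt_of_chain_card_le hchain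
  refine ⟨f ∘ ψ, fun p => hf_lt _ ⟨p, rfl⟩, fun i r s h => ?_, fun p q hpq hf => ?_⟩
  · exact hf_mono ⟨_, rfl⟩ ⟨_, rfl⟩ (Prod.mk_lt_mk.2 (Or.inr ⟨le_rfl, h⟩))
  · by_contra! hw
    exact (hf_mono ⟨_, rfl⟩ ⟨_, rfl⟩ (Prod.mk_lt_mk.2 (Or.inl ⟨hpq, hw⟩))).ne hf

theorem exists_eq_pair_of_noncyclic {α : Type*} {u : List α} (hu : Noncyclic u)
    (hlen : u.length = 2) : ∃ a b, u = [a, b] ∧ a ≠ b := by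
  obtain ⟨a, b, rfl⟩ := List.length_eq_two.1 hlen
  refine ⟨a, b, rfl, ?_⟩
  rintro rfl
  exact hu.2 [a] 2 le_rfl rfl

theorem add_lt_add_of_pair_lt_of_pair_lt {l : ℕ} {a b c d : Fin l} (h : [a, b] < [c, d])
    (h' : [b, a] < [d, c]) : (a : ℕ) + b < c + d := by
  simp only [List.cons_lt_cons_iff, List.lt_irrefl, and_false, or_false] at h h'
  omega

theorem IsGoodSeq.antichain_card_le {t l n N : ℕ} {c : Fin N → List (Fin l)}
    (hc : IsGoodSeq t l n c) (S : Finset (Fin N × Fin t))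
    (hS : ∀ p ∈ S, ∀ q ∈ S, ¬ (p.1 < q.1 ∧ (c p.1).rotate p.2 < (c q.1).rotate q.2)) :
    S.card ≤ n - 1 := by
  have := card_lt_of_not_exists_injective hc.2.2.2 (S := S)
    (by simpa only [List.lex_lt] using hS)
  omega

theorem IsGoodSeq.le_mul_choose_two {l n N : ℕ} {c : Fin N → List (Fin l)}
    (hc : IsGoodSeq 2 l n c) : N ≤ (2 * l - 1) * (n - 1).choose 2 := by
  choose x y hxy hne using fun i => exists_eq_pair_of_noncyclic (hc.1 i) (hc.2.1 i)
  obtain ⟨f, hf_lt, hf_rot, hf_eq⟩ := exists_label_of_antichain_card_le _ hc.antichain_card_le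
  let F : Fin N → ℕ × Finset ℕ := fun i => (x i + y i, {f (i, 0), f (i, 1)})
  have hF (i : Fin N) : F i ∈ range (2 * l - 1) ×ˢ (range (n - 1)).powersetCard 2 := by
    have hlabel : f (i, 0) ≠ f (i, 1) := by
      have hw : (c i).rotate ((0 : Fin 2) : ℕ) ≠ (c i).rotate ((1 : Fin 2) : ℕ) := by
        simp [hxy, hne i]
      exact hw.lt_or_gt.elim (fun h => (hf_rot _ _ _ h).ne') fun h => (hf_rot _ _ _ h).ne
    simp only [F, mem_product, mem_range, mem_powersetCard, card_pair hlabel, insert_subset_iff,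
      singleton_subset_iff, hf_lt, and_true]
    omega
  have hFinj : Function.Injective F := by
    refine Function.Injective.of_lt_imp_ne fun i j hij hFij => ?_
    obtain ⟨hsum, hlabels⟩ := Prod.mk.inj hFij
    have hw (r s : Fin 2) (h : f (i, r) = f (j, s)) :
        [x i, y i].rotate r < [x j, y j].rotate s := by
      simpa only [hxy] using hf_eq (i, r) (j, s) hij h
    rcases Set.pair_eq_pair_iff.1
        (by simpa using congrArg ((↑) : Finset ℕ → Set ℕ) hlabels) with ⟨h0, h1⟩ | ⟨h0, h1⟩
    · have := add_lt_add_of_pair_lt_of_pair_lt (hw 0 0 h0) (hw 1 1 h1)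
      omega
    · have := add_lt_add_of_pair_lt_of_pair_lt (hw 0 1 h0) (hw 1 0 h1)
      omega
  simpa using card_le_card_of_injOn (s := univ) F (fun i _ => hF i) hFinj.injOn

theorem beth_two_upper_bound_general (l n : ℕ) :
    beth 2 l n ≤ (2 * l - 1) * (n - 1) * (n - 2) / 2 := by
  refine csSup_le' fun N ⟨c, hc⟩ => hc.le_mul_choose_two.trans ?_
  rw [Nat.choose_two_right, show n - 1 - 1 = n - 2 by omega, mul_assoc]
  exact Nat.mul_div_le_mul_div_assoc _ _ _

/-- For all integers `l ≥ 1` and `n ≥ 2`, `beth(2, l, n) ≤ (2l−1)(n−1)(n−2)/2`. -/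
theorem beth_two_upper_bound (l n : ℕ) (hl : 1 ≤ l) (hn : 2 ≤ n) :
    beth 2 l n ≤ (2 * l - 1) * (n - 1) * (n - 2) / 2 :=
  beth_two_upper_bound_general l n
end
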